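/- Let V be a real inner product space and g, ḡ ∈ V with ‖g‖² − ⟪g, ḡ⟫ > 0. Set M = −⟪g, ḡ⟫ and choose the blending weight z = max(M/(‖g‖² + M), 0). Then z ∈ [0, 1] and the blended gradient has no reversal against g: ⟪g, z·g + (1 − z)·ḡ⟫ ≥ 0. -/

import Mathlib

open RealInnerProductSpace

/-- **The halo-removal weight eliminates gradient reversal.** For gradients `g`, `ḡ`
with `‖g‖² - ⟪g, ḡ⟫ > 0`, setting `M = -⟪g, ḡ⟫` and the blending weight
`z = max(M/(‖g‖² + M), 0)`, we have `z ∈ [0, 1]` and the blended gradient satisfies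
`⟪g, z•g + (1-z)•ḡ⟫ ≥ 0` (no gradient reversal against `g`). -/
theorem halo_removal_weight {V : Type*} [NormedAddCommGroup V] [InnerProductSpace ℝ V]
    (g gbar : V) (hpos : 0 < ‖g‖ ^ 2 - ⟪g, gbar⟫)
    (M : ℝ) (hM : M = -⟪g, gbar⟫)
    (z : ℝ) (hz : z = max (M / (‖g‖ ^ 2 + M)) 0) :
    z ∈ Set.Icc (0 : ℝ) 1 ∧ 0 ≤ ⟪g, z • g + (1 - z) • gbar⟫ := by
  set t := ⟪g, gbar⟫ with ht
  have hD : 0 < ‖g‖ ^ 2 + M := by rw [hM]; linarith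
  have hexpand : ⟪g, z • g + (1 - z) • gbar⟫ = z * ‖g‖ ^ 2 + (1 - z) * t := by
    rw [inner_add_right, real_inner_smul_right, real_inner_smul_right,
      real_inner_self_eq_norm_sq]
  by_cases hMneg : M ≤ 0
  · have hz0 : z = 0 := by
      rw [hz, max_eq_right]
      exact div_nonpos_of_nonpos_of_nonneg hMneg hD.le
    refine ⟨by simp [hz0], ?_⟩
    rw [hexpand, hz0]
    simp only [zero_mul, sub_zero, one_mul, zero_add]
    rw [hM] at hMneg; linarith
  · push_neg at hMneg
    have hzval : z = M / (‖g‖ ^ 2 + M) := by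
      rw [hz, max_eq_left]
      positivity
    have hz01 : z ∈ Set.Icc (0 : ℝ) 1 := by
      constructor
      · rw [hzval]; positivity
      · rw [hzval, div_le_one hD]
        nlinarith [sq_nonneg ‖g‖]
    refine ⟨hz01, ?_⟩
    rw [hexpand, hzval]
    have : M / (‖g‖ ^ 2 + M) * ‖g‖ ^ 2 + (1 - M / (‖g‖ ^ 2 + M)) * t
        = (M * ‖g‖ ^ 2 + (‖g‖ ^ 2) * t) / (‖g‖ ^ 2 + M) := by
      field_simp
      ring
    rw [this, hM]
    have : -t * ‖g‖ ^ 2 + ‖g‖ ^ 2 * t = 0 := by ring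
    rw [this]
    simp
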